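/- Every matrix A ∈ GL(2, ℤ) with A² = 1, det A = -1, and trace A = 0 is conjugate in GL(2, ℤ) to ![![1, 0], ![0, -1]] or to ![![0, 1], ![1, 0]]. -/
import Mathlib
abbrev M2 := Matrix (Fin 2) (Fin 2) ℤ
def cnj (P : M2ˣ) (M : M2) : M2 := P.val * M * (P⁻¹).val
lemma cnj_comp (P Q : M2ˣ) (M : M2) : cnj Q (cnj P M) = cnj (Q * P) M := by
  simp [cnj, Units.val_mul, mul_inv_rev, mul_assoc]

def Eu (t : ℤ) : M2ˣ :=
  ⟨!![1,t;0,1], !![1,-t;0,1],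
   by rw [Matrix.mul_fin_two, Matrix.one_fin_two]; norm_num,
   by rw [Matrix.mul_fin_two, Matrix.one_fin_two]; norm_num⟩
def Fu (t : ℤ) : M2ˣ :=
  ⟨!![1,0;t,1], !![1,0;-t,1],
   by rw [Matrix.mul_fin_two, Matrix.one_fin_two]; norm_num,
   by rw [Matrix.mul_fin_two, Matrix.one_fin_two]; norm_num⟩
def Su : M2ˣ :=
  ⟨!![0,1;1,0], !![0,1;1,0],
   by rw [Matrix.mul_fin_two, Matrix.one_fin_two]; norm_num,
   by rw [Matrix.mul_fin_two, Matrix.one_fin_two]; norm_num⟩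
def Du : M2ˣ :=
  ⟨!![1,0;0,-1], !![1,0;0,-1],
   by rw [Matrix.mul_fin_two, Matrix.one_fin_two]; norm_num,
   by rw [Matrix.mul_fin_two, Matrix.one_fin_two]; norm_num⟩
def Xu : M2ˣ :=
  ⟨!![0,1;1,-1], !![1,1;1,0],
   by rw [Matrix.mul_fin_two, Matrix.one_fin_two]; norm_num,
   by rw [Matrix.mul_fin_two, Matrix.one_fin_two]; norm_num⟩
def Pu : M2ˣ :=
  ⟨!![1,0;1,1], !![1,0;-1,1],
   by rw [Matrix.mul_fin_two, Matrix.one_fin_two]; norm_num,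
   by rw [Matrix.mul_fin_two, Matrix.one_fin_two]; norm_num⟩

lemma cnj_Eu (t a b c : ℤ) :
    cnj (Eu t) !![a,b;c,-a] = !![a+t*c, b-2*t*a-t^2*c; c, -(a+t*c)] := by
  show !![1,t;0,1] * !![a,b;c,-a] * !![1,-t;0,1] = _
  rw [Matrix.mul_fin_two, Matrix.mul_fin_two]
  ext i j; fin_cases i <;> fin_cases j <;> simp <;> try ring
lemma cnj_Fu (t a b c : ℤ) :
    cnj (Fu t) !![a,b;c,-a] = !![a-t*b, b; c+2*t*a-t^2*b, -(a-t*b)] := by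
  show !![1,0;t,1] * !![a,b;c,-a] * !![1,0;-t,1] = _
  rw [Matrix.mul_fin_two, Matrix.mul_fin_two]
  ext i j; fin_cases i <;> fin_cases j <;> simp <;> try ring
lemma cnj_Su (a b c : ℤ) : cnj Su !![a,b;c,-a] = !![-a,c;b,-(-a)] := by
  show !![0,1;1,0] * !![a,b;c,-a] * !![0,1;1,0] = _
  rw [Matrix.mul_fin_two, Matrix.mul_fin_two]
  ext i j; fin_cases i <;> fin_cases j <;> simp <;> try ring
lemma cnj_Du (a b c : ℤ) : cnj Du !![a,b;c,-a] = !![a,-b;-c,-a] := by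
  show !![1,0;0,-1] * !![a,b;c,-a] * !![1,0;0,-1] = _
  rw [Matrix.mul_fin_two, Matrix.mul_fin_two]
  ext i j; fin_cases i <;> fin_cases j <;> simp <;> try ring
lemma cnj_Xu : cnj Xu !![1,0;1,-1] = !![0,1;1,0] := by
  show !![0,1;1,-1] * !![1,0;1,-1] * !![1,1;1,0] = _
  rw [Matrix.mul_fin_two, Matrix.mul_fin_two]; norm_num
lemma cnj_Pu : cnj Pu !![1,1;0,-1] = !![0,1;1,0] := by
  show !![1,0;1,1] * !![1,1;0,-1] * !![1,0;-1,1] = _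
  rw [Matrix.mul_fin_two, Matrix.mul_fin_two]; norm_num

def Tgt (M : M2) : Prop := M = !![1,0;0,-1] ∨ M = !![0,1;1,0]

lemma cnj_trans {P : M2ˣ} {M M' : M2} (h : cnj P M = M')
    (H : ∃ Q : M2ˣ, Tgt (cnj Q M')) : ∃ R : M2ˣ, Tgt (cnj R M) := by
  obtain ⟨Q, hQ⟩ := H
  exact ⟨Q * P, by rw [← cnj_comp, h]; exact hQ⟩

-- case a = 1, b = 0 : !![1,0;c,-1]
lemma caseA (c : ℤ) : ∃ R : M2ˣ, Tgt (cnj R !![1,0;c,-1]) := by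
  have h0 : (!![1,0;c,-1] : M2) = !![(1:ℤ),0;c,-(1)] := by norm_num
  rw [h0]
  set t : ℤ := -(c / 2) with ht
  have hmod : c + 2 * t = c % 2 := by
    have := Int.mul_ediv_add_emod c 2; omega
  refine cnj_trans (cnj_Fu t 1 0 c) ?_
  have h1 : (1 : ℤ) - t * 0 = 1 := by ring
  have hr : c + 2 * t * 1 - t ^ 2 * 0 = c % 2 := by rw [← hmod]; ring
  rw [h1, hr]
  have : c % 2 = 0 ∨ c % 2 = 1 := Int.emod_two_eq c
  rcases this with h | h <;> rw [h]
  · exact ⟨1, Or.inl (by simp [cnj])⟩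
  · exact ⟨Xu, Or.inr cnj_Xu⟩

-- case a = 1, c = 0 : !![1,b;0,-1]
lemma caseB (b : ℤ) : ∃ R : M2ˣ, Tgt (cnj R !![1,b;0,-1]) := by
  have h0 : (!![1,b;0,-1] : M2) = !![(1:ℤ),b;0,-(1)] := by norm_num
  rw [h0]
  set t : ℤ := b / 2 with ht
  have hmod : b - 2 * t = b % 2 := by
    have := Int.mul_ediv_add_emod b 2; omega
  refine cnj_trans (cnj_Eu t 1 b 0) ?_
  have h1 : (1 : ℤ) + t * 0 = 1 := by ring
  have hr : b - 2 * t * 1 - t ^ 2 * 0 = b % 2 := by rw [← hmod]; ring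
  rw [h1, hr]
  have : b % 2 = 0 ∨ b % 2 = 1 := Int.emod_two_eq b
  rcases this with h | h <;> rw [h]
  · exact ⟨1, Or.inl (by simp [cnj])⟩
  · exact ⟨Pu, Or.inr cnj_Pu⟩

lemma case_c0 (a b : ℤ) (ha : a ^ 2 = 1) : ∃ R : M2ˣ, Tgt (cnj R !![a,b;0,-a]) := by
  have hor : a = 1 ∨ a = -1 := by
    have h : (a - 1) * (a + 1) = 0 := by linear_combination ha
    rcases mul_eq_zero.mp h with h | h
    · left; omega
    · right; omega
  rcases hor with rfl | rfl
  · exact caseB b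
  · refine cnj_trans (cnj_Su (-1) b 0) ?_
    norm_num
    exact caseA b

lemma key : ∀ n : ℕ, ∀ a b c : ℤ, c.natAbs ≤ n → a ^ 2 + b * c = 1 →
    ∃ R : M2ˣ, Tgt (cnj R !![a,b;c,-a]) := by
  intro n
  induction n with
  | zero =>
    intro a b c hc h
    have hc0 : c = 0 := by omega
    subst hc0
    exact case_c0 a b (by linarith)
  | succ n IH =>
    intro a b c hc h
    by_cases hc0 : c = 0
    · subst hc0; exact case_c0 a b (by linarith)
    · set m : ℤ := (c.natAbs : ℤ) with hm_def
      have hm : 0 < m := by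
        simp only [hm_def]; exact_mod_cast Int.natAbs_pos.mpr hc0
      set q : ℤ := a / m with hq
      set r : ℤ := a % m with hr
      have hrge : 0 ≤ r := Int.emod_nonneg a (by omega)
      have hrlt : r < m := Int.emod_lt_of_pos a hm
      have hdm : m * q + r = a := Int.mul_ediv_add_emod a m
      have hcm : c = m ∨ c = -m := by
        rcases Int.natAbs_eq c with h' | h'
        · left; rw [hm_def, ← h']
        · right; rw [hm_def, ← h']
      set t : ℤ := if 0 < c then -q else q with ht
      have hsum : a + t * c = r := by
        rcases hcm with h' | h'
        · have hcpos : 0 < c := by omega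
          rw [ht, if_pos hcpos, h']
          linear_combination -hdm
        · have hcneg : ¬ (0 < c) := by omega
          rw [ht, if_neg hcneg, h']
          linear_combination -hdm
      set b' : ℤ := b - 2*t*a - t^2*c with hb'
      have hM : cnj (Eu t) !![a,b;c,-a] = !![r, b'; c, -r] := by
        rw [cnj_Eu, hsum]
      have hrel : r ^ 2 + b' * c = 1 := by
        rw [← hsum, hb']; linear_combination h
      refine cnj_trans hM ?_
      by_cases hm1 : m = 1
      · have hr0 : r = 0 := by omega
        have hbc : b' * c = 1 := by linear_combination hrel - (by rw [hr0]; ring : r^2 = (0:ℤ))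
        rcases Int.mul_eq_one_iff_eq_one_or_neg_one.mp hbc with ⟨hb1, hc1⟩ | ⟨hb1, hc1⟩
        · rw [hr0, hb1, hc1]
          exact ⟨1, Or.inr (by simp [cnj])⟩
        · rw [hr0, hb1, hc1]
          refine ⟨Du, Or.inr ?_⟩
          rw [cnj_Du 0 (-1) (-1)]
          norm_num
      · have hm2 : 2 ≤ m := by omega
        have hM2 : cnj Su !![r, b'; c, -r] = !![-r, c; b', -(-r)] := cnj_Su r b' c
        refine cnj_trans hM2 ?_
        apply IH (-r) c b'
        · have h1 : b'.natAbs * c.natAbs = (1 - r^2).natAbs := by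
            rw [← Int.natAbs_mul]; congr 1; linear_combination hrel
          have h2 : ((1 - r^2).natAbs : ℤ) < m * m := by
            rw [← Int.abs_eq_natAbs, abs_lt]
            constructor <;> nlinarith
          have h3 : b'.natAbs < c.natAbs := by
            have hmm : ((c.natAbs : ℤ)) = m := by rw [hm_def]
            have h2' : (1 - r^2).natAbs < c.natAbs * c.natAbs := by
              have := h2
              rw [← hmm] at this
              exact_mod_cast this
            rw [← h1] at h2'
            exact Nat.lt_of_mul_lt_mul_right h2'
          omega
        · linear_combination hrel

theorem stmt_6 (A : GL (Fin 2) ℤ) (h2 : A ^ 2 = 1)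
    (hdet : Matrix.det (A : Matrix (Fin 2) (Fin 2) ℤ) = -1)
    (htr : Matrix.trace (A : Matrix (Fin 2) (Fin 2) ℤ) = 0) :
    ∃ P : GL (Fin 2) ℤ,
      (P : Matrix (Fin 2) (Fin 2) ℤ) * (A : Matrix (Fin 2) (Fin 2) ℤ) * ((P⁻¹ : GL (Fin 2) ℤ) : Matrix (Fin 2) (Fin 2) ℤ) =
          !![1, 0; 0, -1] ∨
        (P : Matrix (Fin 2) (Fin 2) ℤ) * (A : Matrix (Fin 2) (Fin 2) ℤ) * ((P⁻¹ : GL (Fin 2) ℤ) : Matrix (Fin 2) (Fin 2) ℤ) =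
          !![0, 1; 1, 0] := by
  set M : Matrix (Fin 2) (Fin 2) ℤ := (A : Matrix (Fin 2) (Fin 2) ℤ) with hM
  set a : ℤ := M 0 0 with ha
  set b : ℤ := M 0 1 with hb
  set c : ℤ := M 1 0 with hc
  have htr2 : M 1 1 = -a := by
    rw [Matrix.trace_fin_two] at htr; omega
  have hAeq : M = !![a, b; c, -a] := by
    rw [Matrix.eta_fin_two M, htr2, ha, hb, hc]
  have hrel : a ^ 2 + b * c = 1 := by
    rw [Matrix.det_fin_two, htr2] at hdet
    nlinarith [hdet]
  obtain ⟨R, hR⟩ := key c.natAbs a b c le_rfl hrel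
  refine ⟨R, ?_⟩
  rw [← hAeq] at hR
  exact hR
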